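/- Let U be a minimal idempotent ultrafilter on ℕ, let F(n,m) = 2^n · m, and let A ∈ F_*(U ⊗ U). For every N ∈ ℕ and every sequence Φ = (f_n)_{n≥2} of functions f_n : ℕ → ℕ, there exists a strictly increasing sequence (a_k) of naturals such that for every k and all exponents with 0 ≤ λ_1 ≤ N and 0 ≤ λ_i ≤ f_i(a_{i-1}) for 2 ≤ i ≤ k−1, the number a_k · 2^(∑_{i=1}^{k-1} λ_i a_i) belongs to A. -/
import Mathlib


/-- The extension of addition on ℕ to ultrafilters:
`A ∈ uadd U V ↔ {n | {m | m + n ∈ A} ∈ V} ∈ U`. -/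
def uadd (U V : Ultrafilter ℕ) : Ultrafilter ℕ :=
  U.bind fun n => V.map fun m => m + n

/-- A (nonempty) left ideal of `(βℕ, ⊕)`. -/
def IsLeftIdeal (L : Set (Ultrafilter ℕ)) : Prop :=
  L.Nonempty ∧ ∀ U V : Ultrafilter ℕ, V ∈ L → uadd U V ∈ L

/-- A minimal left ideal of `(βℕ, ⊕)`. -/
def IsMinimalLeftIdeal (L : Set (Ultrafilter ℕ)) : Prop :=
  IsLeftIdeal L ∧ ∀ L' : Set (Ultrafilter ℕ), IsLeftIdeal L' → L' ⊆ L → L' = L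

/-- A minimal ultrafilter: a member of some minimal left ideal of `(βℕ, ⊕)`. -/
def IsMinimalUltrafilter (U : Ultrafilter ℕ) : Prop :=
  ∃ L : Set (Ultrafilter ℕ), IsMinimalLeftIdeal L ∧ U ∈ L

/-- The tensor product of two ultrafilters:
`X ∈ utensor U V ↔ {n | {m | (n, m) ∈ X} ∈ V} ∈ U`. -/
def utensor (U V : Ultrafilter ℕ) : Ultrafilter (ℕ × ℕ) :=
  U.bind fun n => V.map fun m => (n, m)

open Filter Hindman
attribute [local instance] Ultrafilter.add Ultrafilter.addSemigroup

theorem mem_add_iff {M : Type*} [AddSemigroup M] (x y : Ultrafilter M) (A : Set M) :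
    A ∈ x + y ↔ {n | {m | n + m ∈ A} ∈ y} ∈ x := Iff.rfl

theorem mem_uadd_iff (x y : Ultrafilter ℕ) (A : Set ℕ) :
    A ∈ uadd x y ↔ {n | {m | m + n ∈ A} ∈ y} ∈ x := by
  show A ∈ (↑(x.bind fun n => (y.map fun m => m + n)) : Filter ℕ) ↔ _
  rw [show (↑(x.bind fun n => (y.map fun m => m + n)) : Filter ℕ)
      = Filter.bind ↑x (fun n => ↑(y.map fun m => m + n)) from rfl]
  rw [Filter.mem_bind']
  rfl

theorem uadd_eq_add (x y : Ultrafilter ℕ) : uadd x y = x + y := by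
  ext A
  rw [mem_uadd_iff, mem_add_iff]
  have : {n | {m | m + n ∈ A} ∈ y} = {n | {m | n + m ∈ A} ∈ y} := by
    ext n; simp [Nat.add_comm]
  rw [this]

theorem uadd_assoc (x y z : Ultrafilter ℕ) : uadd (uadd x y) z = uadd x (uadd y z) := by
  simp only [uadd_eq_add, add_assoc]

section Min
variable {U : Ultrafilter ℕ}

/-- The key consequence of minimality we use. -/
theorem key_min (hmin : IsMinimalUltrafilter U) (q : Ultrafilter ℕ)
    (hqq : q + q = q) (hqU : q + U = q) (hUq : U + q = q) : q = U := by
  obtain ⟨L₀, ⟨⟨hL0ne, hL0cl⟩, hL0min⟩, hUL0⟩ := hmin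
  have hqL0 : q ∈ L₀ := by
    have := hL0cl q U hUL0
    rwa [uadd_eq_add, hqU] at this
  set L' : Set (Ultrafilter ℕ) := {w | ∃ x, w = uadd x q} with hL'
  have hL'ideal : IsLeftIdeal L' := by
    constructor
    · exact ⟨uadd q q, q, rfl⟩
    · rintro X Y ⟨x, rfl⟩
      exact ⟨uadd X x, (uadd_assoc X x q).symm⟩
  have hL'sub : L' ⊆ L₀ := by
    rintro w ⟨x, rfl⟩
    exact hL0cl x q hqL0
  have hEq : L' = L₀ := hL0min L' hL'ideal hL'sub
  obtain ⟨x, hx⟩ : U ∈ L' := hEq ▸ hUL0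
  have hx' : U = x + q := by rw [hx, uadd_eq_add]
  have : U + q = U := by
    rw [hx', add_assoc, hqq]
  rw [hUq] at this
  exact this

theorem U_nonprincipal (hmin : IsMinimalUltrafilter U) (hidem : U + U = U) : ∀ n, U ≠ pure n := by
  intro n hUn
  have h2 : (pure n + pure n : Ultrafilter ℕ) = pure (n + n) := by
    ext A
    rw [mem_add_iff]
    simp
  rw [hUn, h2] at hidem
  have hnn : n + n = n := by
    have hmem : ({n} : Set ℕ) ∈ (pure (n + n) : Ultrafilter ℕ) := by
      rw [hidem]; exact Ultrafilter.mem_pure.mpr rfl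
    simpa using Ultrafilter.mem_pure.mp hmem
  have hn0 : n = 0 := by omega
  subst hn0
  -- U = pure 0 contradicts minimality
  obtain ⟨L₀, ⟨⟨hL0ne, hL0cl⟩, hL0min⟩, hUL0⟩ := hmin
  rw [hUn] at hUL0
  have huniv : ∀ w : Ultrafilter ℕ, w ∈ L₀ := by
    intro w
    have hw : uadd w (pure 0) = w := by
      ext A
      rw [mem_uadd_iff]
      simp
    have := hL0cl w (pure 0) hUL0
    rwa [hw] at this
  set L' : Set (Ultrafilter ℕ) := {w | ∃ x, w = uadd x (pure 1)} with hL'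
  have hL'ideal : IsLeftIdeal L' := by
    constructor
    · exact ⟨uadd (pure 1) (pure 1), pure 1, rfl⟩
    · rintro X Y ⟨x, rfl⟩
      exact ⟨uadd X x, (uadd_assoc X x (pure 1)).symm⟩
  have hEq : L' = L₀ := hL0min L' hL'ideal (fun w _ => huniv w)
  obtain ⟨x, hx⟩ : pure 0 ∈ L' := hEq ▸ hUL0
  have h0 : ({0} : Set ℕ) ∈ uadd x (pure 1) := by rw [← hx]; exact rfl
  rw [mem_uadd_iff] at h0
  have : {n | {m | m + n ∈ ({0} : Set ℕ)} ∈ (pure 1 : Ultrafilter ℕ)} = ∅ := by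
    ext n; simp
  rw [this] at h0
  exact Ultrafilter.empty_notMem h0

theorem cofinite_mem (hmin : IsMinimalUltrafilter U) (hidem : U + U = U) {C : Set ℕ} (hC : Cᶜ.Finite) : C ∈ U := by
  by_contra h
  have : Cᶜ ∈ U := Ultrafilter.compl_mem_iff_notMem.mpr h
  obtain ⟨a, _, ha⟩ := Ultrafilter.eq_pure_of_finite_mem hC this
  exact U_nonprincipal hmin hidem a ha

end Min

section Star
variable {U : Ultrafilter ℕ}

/-- `shf C n = {m | n + m ∈ C}`. -/
def shf (C : Set ℕ) (n : ℕ) : Set ℕ := {m | n + m ∈ C}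

/-- star set -/
def stars (U : Ultrafilter ℕ) (C : Set ℕ) : Set ℕ := {n | n ∈ C ∧ shf C n ∈ U}

theorem stars_subset {C : Set ℕ} : stars U C ⊆ C := fun _ h => h.1

theorem stars_mem (hidem : U + U = U) {C : Set ℕ} (hC : C ∈ U) : stars U C ∈ U := by
  have h1 : {n | shf C n ∈ U} ∈ U := by
    have : C ∈ U + U := hidem.symm ▸ hC
    rw [mem_add_iff] at this
    exact this
  exact Filter.inter_mem hC h1

theorem stars_shf (hidem : U + U = U) {C : Set ℕ} {n : ℕ} (hn : n ∈ stars U C) : shf (stars U C) n ∈ U := by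
  have h1 : shf C n ∈ U := hn.2
  have h2 : {m | shf C (n + m) ∈ U} ∈ U := by
    have : shf C n ∈ U + U := hidem.symm ▸ h1
    rw [mem_add_iff] at this
    have heq : ∀ m, {j | m + j ∈ shf C n} = shf C (n + m) := by
      intro m; ext j; simp [shf, add_assoc]
    simpa only [heq] using this
  have : shf C n ∩ {m | shf C (n + m) ∈ U} ⊆ shf (stars U C) n := by
    intro m ⟨hm1, hm2⟩
    exact ⟨hm1, hm2⟩
  exact Filter.mem_of_superset (Filter.inter_mem h1 h2) this

end Star

theorem map_addhom {M N : Type*} [AddSemigroup M] [AddSemigroup N] (g : M → N)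
    (hg : ∀ a b, g (a + b) = g a + g b) (x y : Ultrafilter M) :
    Ultrafilter.map g (x + y) = Ultrafilter.map g x + Ultrafilter.map g y := by
  ext A
  rw [Ultrafilter.mem_map, mem_add_iff, mem_add_iff]
  have hset : {n | {m | n + m ∈ g ⁻¹' A} ∈ y}
      = g ⁻¹' {n | {m | n + m ∈ A} ∈ Ultrafilter.map g y} := by
    ext n
    simp only [Set.mem_setOf_eq, Set.mem_preimage, Ultrafilter.mem_map]
    have : {m | g (n + m) ∈ A} = g ⁻¹' {m | g n + m ∈ A} := by
      ext m; simp [hg]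
    exact Eq.to_iff (congrArg (· ∈ y) this)
  rw [hset, ← Ultrafilter.mem_map]

namespace LemD

variable (μ L : ℕ) (ms : Stream' ℕ)

abbrev Vec (L : ℕ) := Fin (L + 1) → ℕ

def σs (H : Finset ℕ) : ℕ := ∑ t ∈ H, ms.get t

def pt (a : ℕ) (H : Finset ℕ) : Vec L := fun l => a + (l : ℕ) * (μ * σs ms H)

def diag (a : ℕ) : Vec L := fun _ => a

def Δs : Set (Vec L) := Set.range (diag L)

def AP (i : ℕ) : Set (Vec L) :=
  {v | ∃ a H, H.Nonempty ∧ (∀ t ∈ H, i ≤ t) ∧ v = pt μ L ms a H}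

def Iset : Set (Ultrafilter (Vec L)) := ⋂ i, {w | AP μ L ms i ∈ w}

def Eset : Set (Ultrafilter (Vec L)) := {w | Δs L ∈ w} ∪ Iset μ L ms

theorem diag_add_diag (a b : ℕ) : diag L a + diag L b = diag L (a + b) := rfl

theorem diag_add_pt (c a : ℕ) (H : Finset ℕ) :
    diag L c + pt μ L ms a H = pt μ L ms (c + a) H := by
  funext l
  show c + (a + (l : ℕ) * (μ * σs ms H)) = (c + a) + (l : ℕ) * (μ * σs ms H)
  ring

theorem pt_add_diag (c a : ℕ) (H : Finset ℕ) :
    pt μ L ms a H + diag L c = pt μ L ms (a + c) H := by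
  funext l
  show (a + (l : ℕ) * (μ * σs ms H)) + c = (a + c) + (l : ℕ) * (μ * σs ms H)
  ring

theorem pt_add_pt (a a' : ℕ) (H H' : Finset ℕ) (hd : Disjoint H H') :
    pt μ L ms a H + pt μ L ms a' H' = pt μ L ms (a + a') (H ∪ H') := by
  funext l
  show (a + (l : ℕ) * (μ * σs ms H)) + (a' + (l : ℕ) * (μ * σs ms H'))
      = (a + a') + (l : ℕ) * (μ * σs ms (H ∪ H'))
  have : σs ms (H ∪ H') = σs ms H + σs ms H' := Finset.sum_union hd
  rw [this]; ring

theorem add_helper (w w' : Ultrafilter (Vec L)) (X Z : Set (Vec L))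
    (hX : X ∈ w) (h : ∀ n ∈ X, {m | n + m ∈ Z} ∈ w') : Z ∈ w + w' :=
  (mem_add_iff w w' Z).mpr (Filter.mem_of_superset hX h)

theorem dd (w w' : Ultrafilter (Vec L)) (hw : Δs L ∈ w) (hw' : Δs L ∈ w') :
    Δs L ∈ w + w' := by
  refine add_helper L w w' _ _ hw ?_
  rintro n ⟨a, rfl⟩
  refine Filter.mem_of_superset hw' ?_
  rintro m ⟨b, rfl⟩
  exact ⟨a + b, (diag_add_diag L a b).symm⟩

theorem dap (w w' : Ultrafilter (Vec L)) (i : ℕ) (hw : Δs L ∈ w) (hw' : AP μ L ms i ∈ w') :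
    AP μ L ms i ∈ w + w' := by
  refine add_helper L w w' _ _ hw ?_
  rintro n ⟨c, rfl⟩
  refine Filter.mem_of_superset hw' ?_
  rintro m ⟨a, H, hne, hge, rfl⟩
  exact ⟨c + a, H, hne, hge, (diag_add_pt μ L ms c a H)⟩

theorem apd (w w' : Ultrafilter (Vec L)) (i : ℕ) (hw : AP μ L ms i ∈ w) (hw' : Δs L ∈ w') :
    AP μ L ms i ∈ w + w' := by
  refine add_helper L w w' _ _ hw ?_
  rintro n ⟨a, H, hne, hge, rfl⟩
  refine Filter.mem_of_superset hw' ?_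
  rintro m ⟨c, rfl⟩
  exact ⟨a + c, H, hne, hge, (pt_add_diag μ L ms c a H)⟩

theorem apap (w w' : Ultrafilter (Vec L)) (i : ℕ) (hw : AP μ L ms i ∈ w)
    (hw' : w' ∈ Iset μ L ms) : AP μ L ms i ∈ w + w' := by
  refine add_helper L w w' _ _ hw ?_
  rintro n ⟨a, H, hne, hge, rfl⟩
  have hw'j : AP μ L ms (H.sup id + 1) ∈ w' := Set.mem_iInter.mp hw' _
  refine Filter.mem_of_superset hw'j ?_
  rintro m ⟨a', H', hne', hge', rfl⟩
  have hd : Disjoint H H' := by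
    rw [Finset.disjoint_left]
    intro t ht ht'
    have h1 : t ≤ H.sup id := Finset.le_sup (f := id) ht
    have h2 : H.sup id + 1 ≤ t := hge' t ht'
    omega
  show pt μ L ms a H + pt μ L ms a' H' ∈ AP μ L ms i
  rw [pt_add_pt μ L ms a a' H H' hd]
  refine ⟨a + a', H ∪ H', ?_, ?_, rfl⟩
  · exact Finset.Nonempty.inl hne
  · intro t ht
    rcases Finset.mem_union.mp ht with h | h
    · exact hge t h
    · have h1 : H.sup id + 1 ≤ t := hge' t h
      obtain ⟨t₀, ht₀⟩ := hne
      have : i ≤ H.sup id := le_trans (hge t₀ ht₀) (Finset.le_sup (f := id) ht₀)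
      omega

theorem E_add (w w' : Ultrafilter (Vec L)) (hw : w ∈ Eset μ L ms) (hw' : w' ∈ Eset μ L ms) :
    w + w' ∈ Eset μ L ms := by
  rcases hw with hw | hw
  · rcases hw' with hw' | hw'
    · exact Or.inl (dd L w w' hw hw')
    · exact Or.inr (Set.mem_iInter.mpr fun i => dap μ L ms w w' i hw (Set.mem_iInter.mp hw' i))
  · rcases hw' with hw' | hw'
    · exact Or.inr (Set.mem_iInter.mpr fun i => apd μ L ms w w' i (Set.mem_iInter.mp hw i) hw')
    · exact Or.inr (Set.mem_iInter.mpr fun i => apap μ L ms w w' i (Set.mem_iInter.mp hw i) hw')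

theorem EI_add (w w' : Ultrafilter (Vec L)) (hw : w ∈ Eset μ L ms) (hw' : w' ∈ Iset μ L ms) :
    w + w' ∈ Iset μ L ms := by
  rcases hw with hw | hw
  · exact Set.mem_iInter.mpr fun i => dap μ L ms w w' i hw (Set.mem_iInter.mp hw' i)
  · exact Set.mem_iInter.mpr fun i => apap μ L ms w w' i (Set.mem_iInter.mp hw i) hw'

theorem IE_add (w w' : Ultrafilter (Vec L)) (hw : w ∈ Iset μ L ms) (hw' : w' ∈ Eset μ L ms) :
    w + w' ∈ Iset μ L ms := by
  rcases hw' with hw' | hw'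
  · exact Set.mem_iInter.mpr fun i => apd μ L ms w w' i (Set.mem_iInter.mp hw i) hw'
  · exact Set.mem_iInter.mpr fun i => apap μ L ms w w' i (Set.mem_iInter.mp hw i) hw'




theorem diag_mem_Δs (L a : ℕ) : diag L a ∈ Δs L := ⟨a, rfl⟩

theorem pt_mem_AP (μ L : ℕ) (ms : Stream' ℕ) (i a : ℕ) (H : Finset ℕ) (hne : H.Nonempty)
    (hge : ∀ t ∈ H, i ≤ t) : pt μ L ms a H ∈ AP μ L ms i := ⟨a, H, hne, hge, rfl⟩

theorem lemmaD {U : Ultrafilter ℕ} (hmin : IsMinimalUltrafilter U) (hidem : U + U = U)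
    (W M : Set ℕ) (hW : W ∈ U) (hM : M ∈ U) (μ L : ℕ) :
    ∃ α d : ℕ, d ∈ M ∧ ∀ lam : ℕ, lam ≤ L → α + lam * (μ * d) ∈ W := by
  obtain ⟨ms, hms⟩ := Hindman.exists_FS_of_large U hidem M hM
  have hIne : (Iset μ L ms).Nonempty := by
    set F : Filter (Vec L) := Filter.map (fun i => pt μ L ms 0 {i}) Filter.atTop with hF
    haveI : F.NeBot := Filter.map_neBot
    refine ⟨Ultrafilter.of F, Set.mem_iInter.mpr fun i => ?_⟩
    have h1 : AP μ L ms i ∈ F := by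
      rw [hF, Filter.mem_map]
      refine Filter.mem_of_superset (Filter.Ici_mem_atTop i) ?_
      intro j hj
      exact pt_mem_AP μ L ms i 0 {j} (Finset.singleton_nonempty j) (by simpa using hj)
    exact Filter.le_def.mp (Ultrafilter.of_le F) _ h1
  obtain ⟨w₀, hw₀⟩ := hIne
  set pb : Ultrafilter (Vec L) := Ultrafilter.map (diag L) U with hpb
  have hpbΔ : Δs L ∈ pb := by
    rw [hpb, Ultrafilter.mem_map]
    exact Filter.univ_mem' fun a => diag_mem_Δs L a
  have hpbE : pb ∈ Eset μ L ms := Or.inl hpbΔ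
  have hdiaghom : ∀ a b : ℕ, diag L (a + b) = diag L a + diag L b := fun a b => rfl
  have hpbidem : pb + pb = pb := by
    rw [hpb, ← map_addhom (diag L) hdiaghom U U, hidem]
  set T : Set (Ultrafilter (Vec L)) := ((· + pb) '' Eset μ L ms) ∩ Iset μ L ms with hT
  have hEclosed : IsClosed (Eset μ L ms) :=
    (ultrafilter_isClosed_basic (Δs L)).union
      (isClosed_iInter fun i => ultrafilter_isClosed_basic _)
  have hIclosed : IsClosed (Iset μ L ms) := isClosed_iInter fun i => ultrafilter_isClosed_basic _
  have hTclosed : IsClosed T :=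
    ((hEclosed.isCompact.image (Ultrafilter.continuous_add_left pb)).isClosed).inter hIclosed
  have hTne : T.Nonempty := ⟨w₀ + pb, ⟨w₀, Or.inr hw₀, rfl⟩, IE_add μ L ms w₀ pb hw₀ hpbE⟩
  have hTadd : ∀ x ∈ T, ∀ y ∈ T, x + y ∈ T := by
    rintro x ⟨⟨zx, hzxE, rfl⟩, hxI⟩ y ⟨⟨zy, hzyE, hzy⟩, hyI⟩
    constructor
    · refine ⟨(zx + pb) + zy, E_add μ L ms _ zy (E_add μ L ms zx pb hzxE hpbE) hzyE, ?_⟩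
      show ((zx + pb) + zy) + pb = (zx + pb) + y
      rw [← hzy, add_assoc]
    · exact EI_add μ L ms _ y (E_add μ L ms zx pb hzxE hpbE) hyI
  obtain ⟨eb, hebT, hebidem⟩ := exists_idempotent_in_compact_add_subsemigroup
      Ultrafilter.continuous_add_left T hTne hTclosed.isCompact hTadd
  obtain ⟨⟨z, hzE, hz⟩, hebI⟩ := hebT
  have hebp : eb + pb = eb := by
    rw [← hz]
    show ((fun x => x + pb) z) + pb = _
    simp only
    rw [add_assoc, hpbidem]
  set qb : Ultrafilter (Vec L) := pb + eb with hqb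
  have hqbI : qb ∈ Iset μ L ms := EI_add μ L ms pb eb hpbE hebI
  have hqbidem : qb + qb = qb := by
    rw [hqb, add_assoc, ← add_assoc eb pb eb, hebp, hebidem]
  have hqbp : qb + pb = qb := by rw [hqb, add_assoc, hebp]
  have hpbq : pb + qb = qb := by rw [hqb, ← add_assoc, hpbidem]
  have hcoord : ∀ l : Fin (L + 1), Ultrafilter.map (fun v : Vec L => v l) qb = U := by
    intro l
    have hevhom : ∀ a b : Vec L, (a + b) l = a l + b l := fun a b => rfl
    have hql : Ultrafilter.map (fun v : Vec L => v l) pb = U := by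
      rw [hpb, Ultrafilter.map_map]
      have : (fun v : Vec L => v l) ∘ diag L = id := funext fun a => rfl
      rw [this, Ultrafilter.map_id]
    refine key_min hmin (Ultrafilter.map (fun v : Vec L => v l) qb) ?_ ?_ ?_
    · rw [← map_addhom _ hevhom, hqbidem]
    · conv_lhs => rw [← hql]
      rw [← map_addhom _ hevhom, hqbp]
    · conv_lhs => rw [← hql]
      rw [← map_addhom _ hevhom, hpbq]
  have hWpre : ∀ l : Fin (L + 1), (fun v : Vec L => v l) ⁻¹' W ∈ qb := by
    intro l
    have hW' : W ∈ Ultrafilter.map (fun v : Vec L => v l) qb := (hcoord l).symm ▸ hW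
    exact Ultrafilter.mem_map.mp hW'
  have hbig : (AP μ L ms 0 ∩ ⋂ l : Fin (L + 1), (fun v : Vec L => v l) ⁻¹' W) ∈ qb := by
    have h1 : AP μ L ms 0 ∈ qb := Set.mem_iInter.mp hqbI 0
    have h2 : (⋂ l : Fin (L + 1), (fun v : Vec L => v l) ⁻¹' W) ∈ qb := by
      rw [← Ultrafilter.mem_coe]
      exact Filter.iInter_mem.mpr fun l => hWpre l
    exact Filter.inter_mem h1 h2
  obtain ⟨v, hv1, hv2⟩ := Ultrafilter.nonempty_of_mem hbig
  obtain ⟨a, H, hne, hge, rfl⟩ := hv1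
  refine ⟨a, σs ms H, hms (Hindman.FS.finset_sum ms H hne), ?_⟩
  intro lam hlam
  have hl : lam < L + 1 := Nat.lt_succ_of_le hlam
  have := Set.mem_iInter.mp hv2 ⟨lam, hl⟩
  simpa [pt] using this

end LemD

theorem mem_utensor_iff (x y : Ultrafilter ℕ) (X : Set (ℕ × ℕ)) :
    X ∈ utensor x y ↔ {n | {m | (n, m) ∈ X} ∈ y} ∈ x := by
  show X ∈ (↑(x.bind fun n => (y.map fun m => (n, m))) : Filter (ℕ × ℕ)) ↔ _
  rw [show (↑(x.bind fun n => (y.map fun m => (n, m))) : Filter (ℕ × ℕ))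
      = Filter.bind (↑x : Filter ℕ) (fun n : ℕ => (↑(y.map fun m => (n, m)) : Filter (ℕ × ℕ))) from rfl]
  rw [Filter.mem_bind']
  rfl

theorem exists_chain {σ : Type*} (P : ℕ → σ → Prop) (R : ℕ → σ → σ → Prop)
    (h0 : ∃ s, P 0 s) (hstep : ∀ k s, P k s → ∃ t, P (k + 1) t ∧ R k s t) :
    ∃ g : ℕ → σ, (∀ k, P k (g k)) ∧ ∀ k, R k (g k) (g (k + 1)) := by
  obtain ⟨s0, hs0⟩ := h0
  choose F hP hR using hstep
  let G : (k : ℕ) → {s : σ // P k s} := fun k =>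
    Nat.rec ⟨s0, hs0⟩ (fun k prev => ⟨F k prev.1 prev.2, hP k prev.1 prev.2⟩) k
  exact ⟨fun k => (G k).1, fun k => (G k).2, fun k => hR k (G k).1 (G k).2⟩

section Main

variable {U : Ultrafilter ℕ} {A : Set ℕ} {N : ℕ} {f : ℕ → ℕ → ℕ}

/-- `B = {n | {m | 2^n m ∈ A} ∈ U}`. -/
def Bset (U : Ultrafilter ℕ) (A : Set ℕ) : Set ℕ := {n | {m | 2 ^ n * m ∈ A} ∈ U}

/-- The star set of `B`. -/
def BS (U : Ultrafilter ℕ) (A : Set ℕ) : Set ℕ := stars U (Bset U A)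

/-- The invariant carried through the recursion. -/
def Pst (U : Ultrafilter ℕ) (A : Set ℕ) (N : ℕ) (f : ℕ → ℕ → ℕ) (k : ℕ)
    (s : (ℕ → ℕ) × ℕ) : Prop :=
  (∀ i, i < k → s.1 i < s.1 (i + 1)) ∧
  (∀ lam : ℕ → ℕ, lam 1 ≤ N → (∀ i, 2 ≤ i → i ≤ k → lam i ≤ f i (s.1 (i - 1))) →
      ((∑ i ∈ Finset.Ico 1 (k + 1), lam i * s.1 i) + s.2) ∈ BS U A) ∧
  (∀ j, 1 ≤ j → j ≤ k → ∀ lam : ℕ → ℕ, lam 1 ≤ N →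
      (∀ i, 2 ≤ i → i ≤ j - 1 → lam i ≤ f i (s.1 (i - 1))) →
      s.1 j * 2 ^ (∑ i ∈ Finset.Ico 1 j, lam i * s.1 i) ∈ A)

theorem step_lemma (hmin : IsMinimalUltrafilter U) (hidem' : U + U = U)
    (k : ℕ) (s : (ℕ → ℕ) × ℕ) (hP : Pst U A N f k s) :
    ∃ t, Pst U A N f (k + 1) t ∧ ∀ i ≤ k, t.1 i = s.1 i := by
  classical
  obtain ⟨hmono, hinv, hmem⟩ := hP
  obtain ⟨a, ε⟩ := s
  simp only at hmono hinv hmem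
  set L' : ℕ := if k = 0 then N else f (k + 1) (a k) with hL'
  set bnd : ℕ → ℕ := fun i => if i = 1 then N else f i (a (i - 1)) with hbnd
  set BIG : ℕ := ∑ i ∈ Finset.Ico 1 (k + 1), bnd i * a i with hBIG
  set S : Finset ℕ := (Finset.range (BIG + 1)).filter
      (fun x => ∃ lam : ℕ → ℕ, lam 1 ≤ N ∧ (∀ i, 2 ≤ i → i ≤ k → lam i ≤ f i (a (i - 1))) ∧
        x = ∑ i ∈ Finset.Ico 1 (k + 1), lam i * a i) with hS
  have hmemS : ∀ lam : ℕ → ℕ, lam 1 ≤ N → (∀ i, 2 ≤ i → i ≤ k → lam i ≤ f i (a (i - 1))) →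
      (∑ i ∈ Finset.Ico 1 (k + 1), lam i * a i) ∈ S := by
    intro lam h1 h2
    rw [hS, Finset.mem_filter, Finset.mem_range]
    refine ⟨Nat.lt_succ_of_le ?_, lam, h1, h2, rfl⟩
    apply Finset.sum_le_sum
    intro i hi
    rw [Finset.mem_Ico] at hi
    apply Nat.mul_le_mul_right
    rw [hbnd]
    by_cases h : i = 1
    · subst h; simpa using h1
    · have h2i : 2 ≤ i := by omega
      simp only [if_neg h]
      exact h2 i h2i (by omega)
  have hSprop : ∀ x ∈ S, (x + ε) ∈ BS U A := by
    intro x hx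
    rw [hS, Finset.mem_filter] at hx
    obtain ⟨-, lam, h1, h2, rfl⟩ := hx
    exact hinv lam h1 h2
  set W : Set ℕ := ⋂ x ∈ S, shf (BS U A) (x + ε) with hW
  have hWU : W ∈ U := by
    rw [hW, ← Ultrafilter.mem_coe, Filter.biInter_finset_mem]
    intro x hx
    exact stars_shf hidem' (hSprop x hx)
  set M : Set ℕ := (⋂ x ∈ S, {d | 2 ^ (x + ε) * d ∈ A}) ∩ {d | a k < d} with hM
  have hMU : M ∈ U := by
    rw [hM, ← Ultrafilter.mem_coe]
    apply Filter.inter_mem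
    · rw [Filter.biInter_finset_mem]
      intro x hx
      exact stars_subset (hSprop x hx)
    · have hcof : {d | a k < d}ᶜ.Finite := by
        have : {d | a k < d}ᶜ = Set.Iic (a k) := by
          ext d; simp [Nat.not_lt]
        rw [this]; exact Set.finite_Iic _
      exact cofinite_mem hmin hidem' hcof
  obtain ⟨α, d, hdM, hαd⟩ := LemD.lemmaD hmin hidem' W M hWU hMU (2 ^ ε) L'
  rw [hM] at hdM
  obtain ⟨hdA, hdgt⟩ := hdM
  set a' : ℕ → ℕ := Function.update a (k + 1) (2 ^ ε * d) with ha'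
  have hagree : ∀ i, i ≤ k → a' i = a i := by
    intro i hi
    rw [ha']
    exact Function.update_of_ne (by omega) _ _
  have htop : a' (k + 1) = 2 ^ ε * d := by rw [ha']; exact Function.update_self _ _ _
  refine ⟨(a', ε + α), ⟨?_, ?_, ?_⟩, fun i hi => hagree i hi⟩
  · -- monotonicity
    intro i hi
    simp only
    rcases Nat.lt_or_ge i k with h | h
    · rw [hagree i (by omega), hagree (i + 1) (by omega)]
      exact hmono i h
    · have hik : i = k := by omega
      subst hik
      rw [hagree i le_rfl, htop]
      calc a i < d := hdgt
        _ = 1 * d := (one_mul d).symm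
        _ ≤ 2 ^ ε * d := Nat.mul_le_mul_right d Nat.one_le_two_pow
  · -- invariant
    intro lam h1 h2
    simp only at h2 ⊢
    have h2' : ∀ i, 2 ≤ i → i ≤ k → lam i ≤ f i (a (i - 1)) := by
      intro i hi2 hik
      have := h2 i hi2 (by omega)
      rwa [hagree (i - 1) (by omega)] at this
    have hsplit : ∑ i ∈ Finset.Ico 1 (k + 1 + 1), lam i * a' i
        = (∑ i ∈ Finset.Ico 1 (k + 1), lam i * a' i) + lam (k + 1) * a' (k + 1) :=
      Finset.sum_Ico_succ_top (by omega) _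
    have hsum : ∑ i ∈ Finset.Ico 1 (k + 1), lam i * a' i
        = ∑ i ∈ Finset.Ico 1 (k + 1), lam i * a i := by
      refine Finset.sum_congr rfl fun i hi => ?_
      rw [Finset.mem_Ico] at hi
      rw [hagree i (by omega)]
    have hxS : (∑ i ∈ Finset.Ico 1 (k + 1), lam i * a i) ∈ S := hmemS lam h1 h2'
    have hlamL : lam (k + 1) ≤ L' := by
      rw [hL']
      by_cases hk0 : k = 0
      · subst hk0; simpa using h1
      · simp only [if_neg hk0]
        have := h2 (k + 1) (by omega) le_rfl
        rwa [hagree (k + 1 - 1) (by omega)] at this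
    have hWmem := hαd (lam (k + 1)) hlamL
    rw [hW] at hWmem
    have hshf : (α + lam (k + 1) * (2 ^ ε * d))
        ∈ shf (BS U A) ((∑ i ∈ Finset.Ico 1 (k + 1), lam i * a i) + ε) :=
      Set.mem_iInter₂.mp hWmem _ hxS
    have hBsmem : ((∑ i ∈ Finset.Ico 1 (k + 1), lam i * a i) + ε)
        + (α + lam (k + 1) * (2 ^ ε * d)) ∈ BS U A := hshf
    have heq : (∑ i ∈ Finset.Ico 1 (k + 1 + 1), lam i * a' i) + (ε + α)
        = ((∑ i ∈ Finset.Ico 1 (k + 1), lam i * a i) + ε)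
          + (α + lam (k + 1) * (2 ^ ε * d)) := by
      rw [hsplit, hsum, htop]; ring
    rw [heq]
    exact hBsmem
  · -- A-membership
    intro j hj1 hjk lam h1 h2
    simp only at h2 ⊢
    rcases Nat.lt_or_ge j (k + 1) with hjk' | hjk'
    · have h2' : ∀ i, 2 ≤ i → i ≤ j - 1 → lam i ≤ f i (a (i - 1)) := by
        intro i hi2 hij
        have := h2 i hi2 hij
        rwa [hagree (i - 1) (by omega)] at this
      have hsum : ∑ i ∈ Finset.Ico 1 j, lam i * a' i
          = ∑ i ∈ Finset.Ico 1 j, lam i * a i := by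
        refine Finset.sum_congr rfl fun i hi => ?_
        rw [Finset.mem_Ico] at hi
        rw [hagree i (by omega)]
      rw [hagree j (by omega), hsum]
      exact hmem j hj1 (by omega) lam h1 h2'
    · have hj : j = k + 1 := by omega
      subst hj
      have h2' : ∀ i, 2 ≤ i → i ≤ k → lam i ≤ f i (a (i - 1)) := by
        intro i hi2 hik
        have := h2 i hi2 (by omega)
        rwa [hagree (i - 1) (by omega)] at this
      have hsum : ∑ i ∈ Finset.Ico 1 (k + 1), lam i * a' i
          = ∑ i ∈ Finset.Ico 1 (k + 1), lam i * a i := by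
        refine Finset.sum_congr rfl fun i hi => ?_
        rw [Finset.mem_Ico] at hi
        rw [hagree i (by omega)]
      have hxS : (∑ i ∈ Finset.Ico 1 (k + 1), lam i * a i) ∈ S := hmemS lam h1 h2'
      have hdx : 2 ^ ((∑ i ∈ Finset.Ico 1 (k + 1), lam i * a i) + ε) * d ∈ A :=
        Set.mem_iInter₂.mp hdA _ hxS
      rw [hsum, htop]
      have heq : 2 ^ ε * d * 2 ^ (∑ i ∈ Finset.Ico 1 (k + 1), lam i * a i)
          = 2 ^ ((∑ i ∈ Finset.Ico 1 (k + 1), lam i * a i) + ε) * d := by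
        rw [pow_add]; ring
      rw [heq]
      exact hdx

end Main


/-- Main Theorem: if `U` is a minimal idempotent ultrafilter,
`F (n, m) = 2 ^ n * m`, and `A ∈ F_*(U ⊗ U)`, then for every `N` and every
sequence `Φ = (f_n)` of functions there is a strictly increasing sequence
`(a_k)` such that all numbers `a_k · 2 ^ (∑_{i=1}^{k-1} λ_i a_i)` with
`0 ≤ λ_1 ≤ N` and `0 ≤ λ_i ≤ f_i(a_{i-1})` for `2 ≤ i ≤ k-1` belong to `A`. -/
theorem main_theorem (U : Ultrafilter ℕ) (hmin : IsMinimalUltrafilter U)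
    (hidem : uadd U U = U) (A : Set ℕ)
    (hA : A ∈ Ultrafilter.map (fun p : ℕ × ℕ => 2 ^ p.1 * p.2) (utensor U U))
    (N : ℕ) (f : ℕ → ℕ → ℕ) :
    ∃ a : ℕ → ℕ, StrictMono a ∧
      ∀ k, 1 ≤ k → ∀ lam : ℕ → ℕ, lam 1 ≤ N →
        (∀ i, 2 ≤ i → i ≤ k - 1 → lam i ≤ f i (a (i - 1))) →
        a k * 2 ^ (∑ i ∈ Finset.Ico 1 k, lam i * a i) ∈ A := by
  classical
  have hidem' : U + U = U := by rw [← uadd_eq_add]; exact hidem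
  have hB : Bset U A ∈ U := by
    rw [Ultrafilter.mem_map, mem_utensor_iff] at hA
    exact hA
  have hBsU : BS U A ∈ U := stars_mem hidem' hB
  obtain ⟨ε₀, hε₀⟩ := Ultrafilter.nonempty_of_mem hBsU
  have hbase : Pst U A N f 0 ((fun _ => 0), ε₀) := by
    refine ⟨fun i hi => absurd hi (by omega), ?_,
      fun j hj1 hj0 => absurd (le_trans hj1 hj0) (by omega)⟩
    intro lam h1 h2
    simpa using hε₀
  obtain ⟨g, hgP, hgR⟩ := exists_chain (Pst U A N f) (fun k s t => ∀ i ≤ k, t.1 i = s.1 i)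
      ⟨_, hbase⟩ (fun k s hP => step_lemma hmin hidem' k s hP)
  have hagree : ∀ j k, j ≤ k → (g k).1 j = (g j).1 j := by
    intro j k hjk
    induction k with
    | zero =>
        have : j = 0 := by omega
        subst this; rfl
    | succ k ih =>
        rcases Nat.lt_or_ge j (k + 1) with h | h
        · rw [hgR k j (by omega)]
          exact ih (by omega)
        · have : j = k + 1 := by omega
          subst this; rfl
  set af : ℕ → ℕ := fun j => (g j).1 j with haf
  have hafi : ∀ i, af i = (g i).1 i := fun i => rfl
  refine ⟨af, ?_, ?_⟩
  · apply strictMono_nat_of_lt_succ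
    intro j
    have h1 : (g (j + 1)).1 j < (g (j + 1)).1 (j + 1) := (hgP (j + 1)).1 j (by omega)
    rw [hagree j (j + 1) (by omega)] at h1
    rw [hafi j, hafi (j + 1)]
    exact h1
  · intro k hk lam h1 h2
    have hsum : (∑ i ∈ Finset.Ico 1 k, lam i * af i)
        = ∑ i ∈ Finset.Ico 1 k, lam i * (g k).1 i := by
      refine Finset.sum_congr rfl fun i hi => ?_
      rw [Finset.mem_Ico] at hi
      rw [hafi i, hagree i k (by omega)]
    have h2' : ∀ i, 2 ≤ i → i ≤ k - 1 → lam i ≤ f i ((g k).1 (i - 1)) := by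
      intro i hi2 hik
      have hx := h2 i hi2 hik
      rw [hafi (i - 1)] at hx
      rw [hagree (i - 1) k (by omega)]
      exact hx
    have hmem := (hgP k).2.2 k hk le_rfl lam h1 h2'
    rw [hafi k, hsum]
    exact hmem
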